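/- arXiv:2212.12971 — 2 statements merged into one kernel-verified Lean document; each statement's English description precedes it below -/
import Mathlib

section
/- Let n, i, e be positive integers. If n^i · i divides e, then n^i divides the binomial coefficient C(e, i). -/
/-! `k · C(e, k) = e · C(e - 1, k - 1)`, so `m · k ∣ e` gives `m · k ∣ k · C(e, k)`; cancel `k`. -/

theorem Nat.dvd_choose_of_mul_dvd {m k e : ℕ} (hk : 0 < k) (h : m * k ∣ e) :
    m ∣ e.choose k := by
  obtain ⟨k, rfl⟩ := Nat.exists_eq_add_one_of_ne_zero hk.ne'
  rcases e with _ | e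
  · simp
  refine Nat.dvd_of_mul_dvd_mul_right hk ?_
  rw [← Nat.add_one_mul_choose_eq]
  exact h.mul_right _

theorem pow_dvd_choose_of_pow_mul_dvd_general (n i e : ℕ) (hi : 0 < i)
    (h : n ^ i * i ∣ e) : n ^ i ∣ e.choose i :=
  Nat.dvd_choose_of_mul_dvd hi h

/-- If `n^i · i` divides `e`, then `n^i` divides the binomial coefficient `C(e, i)`. -/
theorem pow_dvd_choose_of_pow_mul_dvd (n i e : ℕ) (hn : 0 < n) (hi : 0 < i) (he : 0 < e)
    (h : n ^ i * i ∣ e) : n ^ i ∣ e.choose i :=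
  pow_dvd_choose_of_pow_mul_dvd_general n i e hi h
end

section
/- Let Λ be the exterior algebra over ℚ on generators x₁, …, x_g, y₁, …, y_g, with g ≥ 2 and 1 ≤ t ≤ g-1. Let b = Σ_{i=1}^{t} x_i ∧ y_{i+1}, let ω = x₁ ∧ y₂ ∧ x₂ ∧ y₃ ∧ ⋯ ∧ x_t ∧ y_{t+1}, and let A ⊆ Λ be the ℚ-subalgebra generated by the elements x_i ∧ y_i for 1 ≤ i ≤ g. Then for every 1 ≤ j ≤ t and every element c ∈ A of degree 2j, the coefficient of ω (in the standard monomial basis of Λ in the generators x_i, y_i) in the product b^{t-j} ∧ c is zero. -/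
/-!
Give the generator `x_{i+1}` (index `i < g`) charge `i + 1` and `y_{i+1}` (index `g + i`)
charge `-i`. Every term `x_i ∧ y_{i+1}` of `b`, and hence `ω`, has charge `0`, while each
`x_i ∧ y_i` has charge `1`, so `b^{t-j} ∧ c` is a combination of monomials of charge `j ≥ 1`.
Charge is additive and reordering anticommuting generators only changes a monomial by a sign
(or kills it), so none of these monomials is a multiple of `ω`.
-/

open List Submodule

section Anticommuting

variable {A : Type*} [Ring A] {N : ℕ} {gen : ℕ → A}

lemma exists_prod_map_eq_zsmul_of_perm
    (hanti : ∀ a < N, ∀ b < N, gen a * gen b = -(gen b * gen a))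
    {l l' : List ℕ} (h : l.Perm l') (hl : ∀ k ∈ l, k < N) :
    ∃ ε : ℤ, (l.map gen).prod = ε • (l'.map gen).prod := by
  induction h with
  | nil => exact ⟨1, by simp⟩
  | cons x _ ih =>
    obtain ⟨ε, hε⟩ := ih fun k hk => hl k (mem_cons_of_mem x hk)
    exact ⟨ε, by rw [map_cons, map_cons, prod_cons, prod_cons, hε, mul_smul_comm]⟩
  | swap x y L =>
    refine ⟨-1, ?_⟩
    simp only [map_cons, prod_cons, ← mul_assoc, hanti y (hl y (by simp)) x (hl x (by simp))]
    simp
  | trans h₁ _ ih₁ ih₂ =>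
    obtain ⟨ε₁, h₁'⟩ := ih₁ hl
    obtain ⟨ε₂, h₂'⟩ := ih₂ fun k hk => hl k (h₁.mem_iff.mpr hk)
    exact ⟨ε₁ * ε₂, by rw [h₁', h₂', mul_smul]⟩

lemma prod_map_eq_zero_of_not_nodup
    (hanti : ∀ a < N, ∀ b < N, gen a * gen b = -(gen b * gen a))
    (hsq : ∀ a < N, gen a * gen a = 0) {l : List ℕ} (hl : ∀ k ∈ l, k < N) (hnd : ¬ l.Nodup) :
    (l.map gen).prod = 0 := by
  obtain ⟨a, ha⟩ : ∃ a, [a, a].Sublist l := by simpa [nodup_iff_sublist] using hnd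
  obtain ⟨L, hL⟩ := ha.exists_perm_append
  obtain ⟨ε, hε⟩ := exists_prod_map_eq_zsmul_of_perm hanti hL hl
  rw [hε]
  simp [← mul_assoc, hsq a (hl a (ha.subset (by simp)))]

lemma apply_prod_map_eq_zero_of_not_perm {M F : Type*} [AddCommGroup M] [FunLike F A M]
    [AddMonoidHomClass F A M] (φ : F)
    (hanti : ∀ a < N, ∀ b < N, gen a * gen b = -(gen b * gen a))
    (hsq : ∀ a < N, gen a * gen a = 0) {l₀ : List ℕ}
    (hφ : ∀ l : List ℕ, l.Pairwise (· < ·) → (∀ k ∈ l, k < N) → l ≠ l₀ → φ (l.map gen).prod = 0)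
    {l : List ℕ} (hl : ∀ k ∈ l, k < N) (hl₀ : ¬ l.Perm l₀) : φ (l.map gen).prod = 0 := by
  by_cases hnd : l.Nodup
  · set s := l.mergeSort (fun a b => decide (a ≤ b))
    have hs : s.Perm l := mergeSort_perm l _
    have hsorted : s.Pairwise (· < ·) :=
      (sortedLE_mergeSort.sortedLT_of_nodup (hs.nodup_iff.mpr hnd)).pairwise
    obtain ⟨ε, hε⟩ := exists_prod_map_eq_zsmul_of_perm hanti hs.symm hl
    rw [hε, map_zsmul, hφ s hsorted (fun k hk => hl k (hs.subset hk))
      (by rintro rfl; exact hl₀ hs.symm), smul_zero]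
  · rw [prod_map_eq_zero_of_not_nodup hanti hsq hl hnd, map_zero]

end Anticommuting

def shiftCharge (g k : ℕ) : ℤ := if k < g then k + 1 else g - k

lemma shiftCharge_add_shiftCharge_succ {g i : ℕ} (hi : i < g) :
    shiftCharge g i + shiftCharge g (g + 1 + i) = 0 := by
  simp only [shiftCharge, hi, if_true, show ¬ g + 1 + i < g by omega, if_false]
  push_cast; ring

lemma shiftCharge_add_shiftCharge_self {g i : ℕ} (hi : i < g) :
    shiftCharge g i + shiftCharge g (g + i) = 1 := by
  simp only [shiftCharge, hi, if_true, show ¬ g + i < g by omega, if_false]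
  push_cast; ring

section ChargeSpan

variable (R : Type*) {A : Type*} [CommRing R] [Ring A] [Algebra R A] (gen : ℕ → A) (N g : ℕ)

def chargeSpan (q : ℤ) : Submodule R A :=
  span R {m | ∃ l : List ℕ, (∀ k ∈ l, k < N) ∧ (l.map (shiftCharge g)).sum = q ∧
    (l.map gen).prod = m}

instance : SetLike.GradedMonoid (chargeSpan R gen N g) where
  one_mem := subset_span ⟨[], by simp, by simp, by simp⟩
  mul_mem := by
    intro p q a b ha hb
    have hab := mul_mem_mul ha hb
    rw [chargeSpan, chargeSpan, span_mul_span] at hab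
    refine span_mono ?_ hab
    rintro _ ⟨_, ⟨l, hl, rfl, rfl⟩, _, ⟨l', hl', rfl, rfl⟩, rfl⟩
    exact ⟨l ++ l', by simpa [or_imp, forall_and] using ⟨hl, hl'⟩, by simp, by simp⟩

variable {R gen N g}

lemma gen_mul_gen_mem_chargeSpan {a b : ℕ} {q : ℤ} (ha : a < N) (hb : b < N)
    (hq : shiftCharge g a + shiftCharge g b = q) : gen a * gen b ∈ chargeSpan R gen N g q :=
  subset_span ⟨[a, b], by simp [ha, hb], by simp [hq], by simp⟩

lemma apply_eq_zero_of_mem_chargeSpan {M : Type*} [AddCommGroup M] [Module R M] (φ : A →ₗ[R] M)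
    (hanti : ∀ a < N, ∀ b < N, gen a * gen b = -(gen b * gen a))
    (hsq : ∀ a < N, gen a * gen a = 0) {l₀ : List ℕ} (hl₀ : (l₀.map (shiftCharge g)).sum = 0)
    (hφ : ∀ l : List ℕ, l.Pairwise (· < ·) → (∀ k ∈ l, k < N) → l ≠ l₀ → φ (l.map gen).prod = 0)
    {q : ℤ} (hq : q ≠ 0) {x : A} (hx : x ∈ chargeSpan R gen N g q) : φ x = 0 := by
  suffices chargeSpan R gen N g q ≤ LinearMap.ker φ from this hx
  refine span_le.mpr ?_
  rintro _ ⟨l, hl, rfl, rfl⟩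
  exact apply_prod_map_eq_zero_of_not_perm φ hanti hsq hφ hl
    fun hperm => hq (by rw [(hperm.map _).sum_eq, hl₀])

end ChargeSpan

lemma sum_map_shiftCharge_range_append_eq_zero {g t : ℕ} (ht : t ≤ g) :
    ((range t ++ (range t).map (fun i => g + 1 + i)).map (shiftCharge g)).sum = 0 := by
  rw [map_append, sum_append, map_map, ← sum_map_add]
  refine sum_eq_zero ?_
  simp only [mem_map, mem_range]
  rintro _ ⟨i, hi, rfl⟩
  exact shiftCharge_add_shiftCharge_succ (by omega)

theorem exterior_omega_coeff_zero_general (g t j : ℕ) (ht : t ≤ g - 1) (hj1 : 1 ≤ j)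
    (gen : ℕ → ExteriorAlgebra ℚ (Fin (2 * g) → ℚ))
    (hgen : ∀ k (h : k < 2 * g),
      gen k = ExteriorAlgebra.ι ℚ (Pi.single (⟨k, h⟩ : Fin (2 * g)) (1 : ℚ)))
    (c : ExteriorAlgebra ℚ (Fin (2 * g) → ℚ))
    (hc : c ∈ Submodule.span ℚ
      {m : ExteriorAlgebra ℚ (Fin (2 * g) → ℚ) | ∃ S : Finset ℕ,
        S.card = j ∧ (∀ i ∈ S, i < g) ∧
        m = ((S.sort (· ≤ ·)).map (fun i => gen i * gen (g + i))).prod})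
    (φ : ExteriorAlgebra ℚ (Fin (2 * g) → ℚ) →ₗ[ℚ] ℚ)
    (hφ : ∀ l : List ℕ, l.Pairwise (· < ·) → (∀ k ∈ l, k < 2 * g) →
      l ≠ List.range t ++ (List.range t).map (fun i => g + 1 + i) →
      φ (l.map gen).prod = 0) :
    φ ((∑ i ∈ Finset.range t, gen i * gen (g + 1 + i)) ^ (t - j) * c) = 0 := by
  have hanti : ∀ a < 2 * g, ∀ b < 2 * g, gen a * gen b = -(gen b * gen a) := fun a ha b hb => by
    rw [hgen a ha, hgen b hb]
    exact eq_neg_of_add_eq_zero_left (ExteriorAlgebra.ι_add_mul_swap _ _)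
  have hsq : ∀ a < 2 * g, gen a * gen a = 0 := fun a ha => by
    rw [hgen a ha]
    exact ExteriorAlgebra.ι_sq_zero _
  have hb : ∑ i ∈ Finset.range t, gen i * gen (g + 1 + i) ∈ chargeSpan ℚ gen (2 * g) g 0 :=
    sum_mem fun i hi => by
      have hi : i < t := Finset.mem_range.mp hi
      exact gen_mul_gen_mem_chargeSpan (by omega) (by omega)
        (shiftCharge_add_shiftCharge_succ (by omega))
  have hc : c ∈ chargeSpan ℚ gen (2 * g) g j := by
    refine span_le.mpr ?_ hc
    rintro _ ⟨S, hS, hSg, rfl⟩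
    have hpair : ∀ i ∈ S.sort (· ≤ ·), gen i * gen (g + i) ∈ chargeSpan ℚ gen (2 * g) g 1 :=
      fun i hi => by
        have hi : i < g := hSg i ((S.mem_sort _).mp hi)
        exact gen_mul_gen_mem_chargeSpan (by omega) (by omega) (shiftCharge_add_shiftCharge_self hi)
    simpa [hS] using SetLike.list_prod_map_mem_graded _ (fun _ => 1) _ hpair
  have hbc := SetLike.mul_mem_graded (SetLike.pow_mem_graded (t - j) hb) hc
  rw [smul_zero, zero_add] at hbc
  exact apply_eq_zero_of_mem_chargeSpan φ hanti hsq
    (sum_map_shiftCharge_range_append_eq_zero (by omega)) hφ (by omega) hbc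

/-- In the exterior algebra over `ℚ` on generators `x₁,…,x_g, y₁,…,y_g`
(here `gen k` for `k < g` is `x_{k+1}` and `gen (g+k)` is `y_{k+1}`), let
`b = Σ_{i=1}^t x_i ∧ y_{i+1}` and let `ω = x₁ ∧ y₂ ∧ x₂ ∧ y₃ ∧ ⋯ ∧ x_t ∧ y_{t+1}`,
whose (sorted) standard-monomial index is the list
`[0,…,t-1] ++ [g+1,…,g+t]`.  Let `c` be an element of degree `2j` of the subalgebra
generated by the `x_i ∧ y_i`, i.e. an element of the span of the `j`-fold products
`∏_{i ∈ S} x_i ∧ y_i`.  Then the coefficient of `ω` in `b^{t-j} ∧ c` is zero: every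
linear functional `φ` vanishing on all standard monomials other than `ω` vanishes
on `b^{t-j} ∧ c`. -/
theorem exterior_omega_coeff_zero (g t j : ℕ) (hg : 2 ≤ g)
    (ht1 : 1 ≤ t) (ht : t ≤ g - 1) (hj1 : 1 ≤ j) (hjt : j ≤ t)
    (gen : ℕ → ExteriorAlgebra ℚ (Fin (2 * g) → ℚ))
    (hgen : ∀ k (h : k < 2 * g),
      gen k = ExteriorAlgebra.ι ℚ (Pi.single (⟨k, h⟩ : Fin (2 * g)) (1 : ℚ)))
    (c : ExteriorAlgebra ℚ (Fin (2 * g) → ℚ))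
    (hc : c ∈ Submodule.span ℚ
      {m : ExteriorAlgebra ℚ (Fin (2 * g) → ℚ) | ∃ S : Finset ℕ,
        S.card = j ∧ (∀ i ∈ S, i < g) ∧
        m = ((S.sort (· ≤ ·)).map (fun i => gen i * gen (g + i))).prod})
    (φ : ExteriorAlgebra ℚ (Fin (2 * g) → ℚ) →ₗ[ℚ] ℚ)
    (hφ : ∀ l : List ℕ, l.Pairwise (· < ·) → (∀ k ∈ l, k < 2 * g) →
      l ≠ List.range t ++ (List.range t).map (fun i => g + 1 + i) →
      φ (l.map gen).prod = 0) :
    φ ((∑ i ∈ Finset.range t, gen i * gen (g + 1 + i)) ^ (t - j) * c) = 0 :=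
  exterior_omega_coeff_zero_general g t j ht hj1 gen hgen c hc φ hφ
end
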